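/- If (Z_n) is c.i.d. and T_1 < T_2 < ... are finite predictable stopping times for the natural filtration of (Z_n), then the sampled sequence (Z_{T_n})_{n≥1} is c.i.d. -/

import Mathlib

/-!
A c.i.d. sequence satisfies `μ (A ∩ {Z (k + 2) ∈ B}) = μ (A ∩ {Z (k + 1) ∈ B})` for `A ∈ 𝒢 k`.
For a stopping time `σ` and `A` in the stopped σ-algebra `𝒢_σ`, splitting `{σ ≤ N + 1}` into
`{σ ≤ N}` and `{σ = N + 1}` and applying this to `A ∩ {σ ≤ N} ∈ 𝒢 N` gives, by induction on `N`,
`μ (A ∩ {σ ≤ N} ∩ {Z (σ + 1) ∈ B}) = μ (A ∩ {σ ≤ N} ∩ {Z (N + 1) ∈ B})`.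
For a later stopping time `σ' ≥ σ` these right-hand sides differ by at most `μ {N < σ'}`, so letting
`N → ∞` shows that `Z (σ + 1)` and `Z (σ' + 1)` have the same law on `A`. Take `σ = S (n + 1)`,
`σ' = S (n + 2)` and `A` an event of `Z (T 1), …, Z (T n)`: as `T j = S j + 1 ≤ S (n + 1)` for
`j ≤ n`, the event lies in `𝒢_{S (n + 1)}`, and testing on boxes gives the c.i.d. property of the
sampled sequence.
-/

open MeasureTheory Filter Topology

/-- Condition (5): `(Z n)` (indexed from 1) is c.i.d. (with respect to its natural
filtration), i.e. `[Z 1, …, Z n, Z (n+2)] ∼ [Z 1, …, Z n, Z (n+1)]` for all `n ≥ 0`. -/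
def IsCIDnat {Ω E : Type*} {mΩ : MeasurableSpace Ω} [MeasurableSpace E]
    (μ : Measure Ω) (Z : ℕ → Ω → E) : Prop :=
  ∀ n : ℕ,
    Measure.map (fun ω (i : Fin (n + 1)) =>
        if (i : ℕ) < n then Z ((i : ℕ) + 1) ω else Z (n + 2) ω) μ
      = Measure.map (fun ω (i : Fin (n + 1)) => Z ((i : ℕ) + 1) ω) μ

section CID

variable {Ω E : Type*}

def initSeq (W : ℕ → Ω → E) (n : ℕ) (ω : Ω) : Fin n → E := fun i => W (i + 1) ω

lemma preimage_snoc_initSeq (W : ℕ → Ω → E) (n m : ℕ) (C : Set (Fin n → E)) (B : Set E) :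
    (fun ω => Fin.snoc (α := fun _ => E) (initSeq W n ω) (W m ω)) ⁻¹'
        {x | Fin.init x ∈ C ∧ x (Fin.last n) ∈ B} = initSeq W n ⁻¹' C ∩ W m ⁻¹' B := by
  ext ω
  simp [Fin.init_snoc]

variable {mΩ : MeasurableSpace Ω} [MeasurableSpace E]

lemma measurable_initSeq {W : ℕ → Ω → E} {n : ℕ} (hW : ∀ i < n, Measurable (W (i + 1))) :
    Measurable (initSeq W n) :=
  measurable_pi_lambda _ fun i => hW i i.isLt

lemma isCIDnat_iff_map_snoc {μ : Measure Ω} {W : ℕ → Ω → E} :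
    IsCIDnat μ W ↔ ∀ n,
      μ.map (fun ω => Fin.snoc (α := fun _ => E) (initSeq W n ω) (W (n + 2) ω))
        = μ.map (fun ω => Fin.snoc (α := fun _ => E) (initSeq W n ω) (W (n + 1) ω)) := by
  refine forall_congr' fun n => ?_
  have hlast : (fun ω (i : Fin (n + 1)) => if (i : ℕ) < n then W (i + 1) ω else W (n + 2) ω)
      = fun ω => Fin.snoc (α := fun _ => E) (initSeq W n ω) (W (n + 2) ω) := by
    funext ω i
    induction i using Fin.lastCases <;> simp [initSeq]
  have hsucc : (fun ω (i : Fin (n + 1)) => W (i + 1) ω)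
      = fun ω => Fin.snoc (α := fun _ => E) (initSeq W n ω) (W (n + 1) ω) := by
    funext ω i
    induction i using Fin.lastCases <;> simp [initSeq]
  rw [hlast, hsucc]

lemma measurableSet_init_last {n : ℕ} {C : Set (Fin n → E)} {B : Set E} (hC : MeasurableSet C)
    (hB : MeasurableSet B) :
    MeasurableSet {x : Fin (n + 1) → E | Fin.init x ∈ C ∧ x (Fin.last n) ∈ B} :=
  (measurable_pi_lambda _ (fun _ => measurable_pi_apply _) hC).inter (measurable_pi_apply _ hB)

lemma measurable_snoc_initSeq {W : ℕ → Ω → E} {n m : ℕ} (hinit : Measurable (initSeq W n))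
    (hm : Measurable (W m)) :
    Measurable fun ω => Fin.snoc (α := fun _ => E) (initSeq W n ω) (W m ω) := by
  refine measurable_pi_lambda _ fun i => ?_
  induction i using Fin.lastCases with
  | last => simpa using hm
  | cast j =>
    simp only [Fin.snoc_castSucc]
    exact (measurable_pi_apply j).comp hinit

lemma IsCIDnat.measure_initSeq_inter {μ : Measure Ω} {W : ℕ → Ω → E}
    (hW : ∀ n, Measurable (W n)) (hcid : IsCIDnat μ W) (n : ℕ) {C : Set (Fin n → E)}
    {B : Set E} (hC : MeasurableSet C) (hB : MeasurableSet B) :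
    μ (initSeq W n ⁻¹' C ∩ W (n + 2) ⁻¹' B) = μ (initSeq W n ⁻¹' C ∩ W (n + 1) ⁻¹' B) := by
  have h := congrArg (· {x | Fin.init x ∈ C ∧ x (Fin.last n) ∈ B})
    (isCIDnat_iff_map_snoc.1 hcid n)
  have hD := measurableSet_init_last hC hB
  have hinit : Measurable (initSeq W n) := measurable_initSeq fun i _ => hW (i + 1)
  have hF := fun m => measurable_snoc_initSeq hinit (hW m)
  simpa only [Measure.map_apply (hF _) hD, preimage_snoc_initSeq] using h

lemma isCIDnat_of_measure_initSeq_inter {μ : Measure Ω} [IsFiniteMeasure μ] {W : ℕ → Ω → E}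
    (hW : ∀ n, Measurable (W (n + 1)))
    (h : ∀ n (C : Set (Fin n → E)) (B : Set E), MeasurableSet C → MeasurableSet B →
      μ (initSeq W n ⁻¹' C ∩ W (n + 2) ⁻¹' B) = μ (initSeq W n ⁻¹' C ∩ W (n + 1) ⁻¹' B)) :
    IsCIDnat μ W := by
  refine isCIDnat_iff_map_snoc.2 fun n => ?_
  have hinit : Measurable (initSeq W n) := measurable_initSeq fun i _ => hW i
  have hF := fun m => measurable_snoc_initSeq hinit (hW m)
  refine ext_of_generate_finite _ generateFrom_pi.symm isPiSystem_pi ?_ ?_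
  · rintro _ ⟨B, hB, rfl⟩
    have hbox : Set.univ.pi B = {x : Fin (n + 1) → E |
        Fin.init x ∈ Set.univ.pi (fun i : Fin n => B i.castSucc) ∧
          x (Fin.last n) ∈ B (Fin.last n)} := by
      ext x
      simp [Fin.forall_fin_succ', Fin.init]
    have hBi : ∀ i, MeasurableSet (B i) := fun i => hB i (Set.mem_univ i)
    rw [Measure.map_apply (hF _) (MeasurableSet.univ_pi hBi),
      Measure.map_apply (hF _) (MeasurableSet.univ_pi hBi), hbox, preimage_snoc_initSeq,
      preimage_snoc_initSeq]
    exact h n _ _ (MeasurableSet.univ_pi fun i => hBi _) (hBi _)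
  · rw [Measure.map_apply (hF _) .univ, Measure.map_apply (hF _) .univ, Set.preimage_univ,
      Set.preimage_univ]

end CID

section Sampling

variable {Ω E : Type*} {mΩ : MeasurableSpace Ω} [MeasurableSpace E] {μ : Measure Ω}
  {Z : ℕ → Ω → E} {𝒢 : Filtration ℕ mΩ}

lemma natural_le_comap_initSeq
    (h𝒢 : ∀ n, 𝒢 n = ⨆ i ∈ Set.Icc 1 n, MeasurableSpace.comap (Z i) inferInstance) (k : ℕ) :
    𝒢 k ≤ MeasurableSpace.comap (initSeq Z k) inferInstance := by
  rw [h𝒢 k]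
  refine iSup₂_le fun i hi => ?_
  obtain ⟨j, rfl⟩ : ∃ j, i = j + 1 := ⟨i - 1, by grind⟩
  have hj : j < k := by grind
  rw [show Z (j + 1) = (fun x => x ⟨j, hj⟩) ∘ initSeq Z k from rfl, ← MeasurableSpace.comap_comp]
  exact MeasurableSpace.comap_mono (measurable_pi_apply _).comap_le

lemma measurable_succ_of_natural
    (h𝒢 : ∀ n, 𝒢 n = ⨆ i ∈ Set.Icc 1 n, MeasurableSpace.comap (Z i) inferInstance) (m : ℕ) :
    Measurable[𝒢 (m + 1)] (Z (m + 1)) := by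
  refine Measurable.of_comap_le ?_
  rw [h𝒢]
  exact le_iSup₂ (f := fun i _ => MeasurableSpace.comap (Z i) inferInstance) (m + 1)
    ⟨by omega, le_rfl⟩

lemma IsCIDnat.measure_inter_succ_succ (hZ : ∀ n, Measurable (Z n)) (hcid : IsCIDnat μ Z)
    (h𝒢 : ∀ n, 𝒢 n = ⨆ i ∈ Set.Icc 1 n, MeasurableSpace.comap (Z i) inferInstance) {k : ℕ}
    {A : Set Ω} (hA : MeasurableSet[𝒢 k] A) {B : Set E} (hB : MeasurableSet B) :
    μ (A ∩ Z (k + 2) ⁻¹' B) = μ (A ∩ Z (k + 1) ⁻¹' B) := by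
  obtain ⟨C, hC, rfl⟩ := natural_le_comap_initSeq h𝒢 k A hA
  exact hcid.measure_initSeq_inter hZ k hC hB

lemma MeasureTheory.IsStoppingTime.measurable_of_nat {σ : Ω → ℕ}
    (hσ : IsStoppingTime 𝒢 fun ω => (σ ω : WithTop ℕ)) : Measurable σ :=
  measurable_to_countable' fun n => 𝒢.le n _ <| by
    convert hσ.measurableSet_eq n using 1
    ext
    simp

lemma IsCIDnat.measure_inter_le_sampled (hZ : ∀ n, Measurable (Z n)) (hcid : IsCIDnat μ Z)
    (h𝒢 : ∀ n, 𝒢 n = ⨆ i ∈ Set.Icc 1 n, MeasurableSpace.comap (Z i) inferInstance)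
    {σ : Ω → ℕ} (hσ : IsStoppingTime 𝒢 fun ω => (σ ω : WithTop ℕ)) {A : Set Ω}
    (hA : MeasurableSet[hσ.measurableSpace] A) {B : Set E} (hB : MeasurableSet B) (N : ℕ) :
    μ (A ∩ {ω | σ ω ≤ N} ∩ {ω | Z (σ ω + 1) ω ∈ B})
      = μ (A ∩ {ω | σ ω ≤ N} ∩ Z (N + 1) ⁻¹' B) := by
  have hA_le : ∀ N, MeasurableSet[𝒢 N] (A ∩ {ω | σ ω ≤ N}) := fun N => by simpa using hA.2 N
  induction N with
  | zero =>
    congr 1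
    ext ω
    simp +contextual
  | succ N ih =>
    have hσN : MeasurableSet {ω | σ ω ≤ N} := measurableSet_le hσ.measurable_of_nat measurable_const
    have hsplit : ∀ Y, μ (A ∩ {ω | σ ω ≤ N + 1} ∩ Y)
        = μ (A ∩ {ω | σ ω ≤ N} ∩ Y) + μ (A ∩ {ω | σ ω = N + 1} ∩ Y) := fun Y => by
      rw [← measure_inter_add_sdiff (A ∩ {ω | σ ω ≤ N + 1} ∩ Y) hσN]
      congr 2 <;> ext ω <;>
        simp only [Set.mem_inter_iff, Set.mem_sdiff, Set.mem_ofPred_eq] <;> grind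
    have hlast : A ∩ {ω | σ ω = N + 1} ∩ {ω | Z (σ ω + 1) ω ∈ B}
        = A ∩ {ω | σ ω = N + 1} ∩ Z (N + 2) ⁻¹' B := by
      ext ω
      simp +contextual
    calc μ (A ∩ {ω | σ ω ≤ N + 1} ∩ {ω | Z (σ ω + 1) ω ∈ B})
        = μ (A ∩ {ω | σ ω ≤ N} ∩ {ω | Z (σ ω + 1) ω ∈ B})
          + μ (A ∩ {ω | σ ω = N + 1} ∩ Z (N + 2) ⁻¹' B) := by rw [hsplit, hlast]
      _ = μ (A ∩ {ω | σ ω ≤ N} ∩ Z (N + 2) ⁻¹' B)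
          + μ (A ∩ {ω | σ ω = N + 1} ∩ Z (N + 2) ⁻¹' B) := by
        rw [ih, hcid.measure_inter_succ_succ hZ h𝒢 (hA_le N) hB]
      _ = μ (A ∩ {ω | σ ω ≤ N + 1} ∩ Z (N + 1 + 1) ⁻¹' B) := (hsplit _).symm

lemma tendsto_measure_inter_le_atTop (σ : Ω → ℕ) (F : Set Ω) :
    Tendsto (fun N : ℕ => μ (F ∩ {ω | σ ω ≤ N})) atTop (𝓝 (μ F)) := by
  have hmono : Monotone fun N : ℕ => F ∩ {ω | σ ω ≤ N} := fun _ _ hNM =>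
    Set.inter_subset_inter_right _ fun _ hω => le_trans hω hNM
  have hunion : ⋃ N : ℕ, F ∩ {ω | σ ω ≤ N} = F := by
    ext ω
    simpa using fun _ => ⟨σ ω, le_rfl⟩
  simpa only [hunion, Function.comp_def] using tendsto_measure_iUnion_atTop hmono

lemma tendsto_measure_lt_atTop [IsFiniteMeasure μ] {σ : Ω → ℕ} (hσ : Measurable σ) :
    Tendsto (fun N : ℕ => μ {ω | N < σ ω}) atTop (𝓝 0) := by
  have hanti : Antitone fun N : ℕ => {ω | N < σ ω} := fun _ _ hNM _ hω => lt_of_le_of_lt hNM hω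
  have hempty : ⋂ N : ℕ, {ω | N < σ ω} = ∅ := by
    ext ω
    simpa using ⟨σ ω, le_rfl⟩
  simpa [hempty, Function.comp_def] using tendsto_measure_iInter_atTop
    (fun N => (measurableSet_lt measurable_const hσ).nullMeasurableSet) hanti
    ⟨0, measure_ne_top μ _⟩

lemma IsCIDnat.measure_inter_sampled_eq_of_le [IsFiniteMeasure μ] (hZ : ∀ n, Measurable (Z n))
    (hcid : IsCIDnat μ Z)
    (h𝒢 : ∀ n, 𝒢 n = ⨆ i ∈ Set.Icc 1 n, MeasurableSpace.comap (Z i) inferInstance)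
    {σ σ' : Ω → ℕ} (hσ : IsStoppingTime 𝒢 fun ω => (σ ω : WithTop ℕ))
    (hσ' : IsStoppingTime 𝒢 fun ω => (σ' ω : WithTop ℕ)) (hle : ∀ ω, σ ω ≤ σ' ω) {A : Set Ω}
    (hA : MeasurableSet[hσ.measurableSpace] A) {B : Set E} (hB : MeasurableSet B) :
    μ (A ∩ {ω | Z (σ' ω + 1) ω ∈ B}) = μ (A ∩ {ω | Z (σ ω + 1) ω ∈ B}) := by
  have hA' : MeasurableSet[hσ'.measurableSpace] A :=
    hσ.measurableSpace_mono hσ' (fun ω => by simpa using hle ω) A hA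
  have hlim : ∀ {τ : Ω → ℕ} (hτ : IsStoppingTime 𝒢 fun ω => (τ ω : WithTop ℕ)),
      MeasurableSet[hτ.measurableSpace] A →
      Tendsto (fun N : ℕ => μ (A ∩ {ω | τ ω ≤ N} ∩ Z (N + 1) ⁻¹' B)) atTop
        (𝓝 (μ (A ∩ {ω | Z (τ ω + 1) ω ∈ B}))) := by
    intro τ hτ hAτ
    refine (tendsto_measure_inter_le_atTop τ _).congr fun N => ?_
    rw [Set.inter_right_comm, hcid.measure_inter_le_sampled hZ h𝒢 hτ hAτ hB]
  refine le_antisymm (le_of_tendsto_of_tendsto' (hlim hσ' hA') (hlim hσ hA) fun N => ?_) ?_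
  · exact measure_mono fun ω ⟨⟨hωA, hωN⟩, hωB⟩ => ⟨⟨hωA, (hle ω).trans hωN⟩, hωB⟩
  refine le_of_tendsto_of_tendsto' (hlim hσ hA)
    (by simpa using (hlim hσ' hA').add (tendsto_measure_lt_atTop hσ'.measurable_of_nat))
    fun N => (measure_mono fun ω hω => ?_).trans (measure_union_le _ _)
  by_cases hωN : σ' ω ≤ N
  · exact Or.inl ⟨⟨hω.1.1, hωN⟩, hω.2⟩
  · exact Or.inr (not_le.1 hωN)

lemma measurable_comp_stoppingTime_of_lt {u : ℕ → Ω → E}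
    (hu : ∀ m, Measurable[𝒢 (m + 1)] (u m)) {τ σ : Ω → ℕ}
    (hτ : IsStoppingTime 𝒢 fun ω => (τ ω : WithTop ℕ))
    (hσ : IsStoppingTime 𝒢 fun ω => (σ ω : WithTop ℕ)) (hlt : ∀ ω, τ ω < σ ω) :
    Measurable[hσ.measurableSpace] fun ω => u (τ ω) ω := by
  intro B hB
  set P := (fun ω => u (τ ω) ω) ⁻¹' B
  have hP : ∀ i, MeasurableSet[𝒢 i] (P ∩ {ω | σ ω ≤ i}) := by
    intro i
    have hdecomp : P ∩ {ω | σ ω ≤ i}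
        = ⋃ t < i, ({ω | τ ω = t} ∩ u t ⁻¹' B) ∩ {ω | σ ω ≤ i} := by
      ext ω
      simp only [P, Set.mem_inter_iff, Set.mem_preimage, Set.mem_iUnion, Set.mem_ofPred_eq]
      exact ⟨fun h => ⟨τ ω, (hlt ω).trans_le h.2, ⟨rfl, h.1⟩, h.2⟩,
        fun ⟨_, _, ⟨ht, hB⟩, hi⟩ => ⟨ht ▸ hB, hi⟩⟩
    rw [hdecomp]
    refine .biUnion (Set.to_countable _) fun t (ht : t < i) => .inter (.inter ?_ ?_) ?_
    · exact 𝒢.mono ht.le _ (by simpa using hτ.measurableSet_eq t)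
    · exact 𝒢.mono ht _ (hu t hB)
    · simpa using hσ.measurableSet_le i
  refine ⟨?_, fun i => by simpa using hP i⟩
  have hunion : P = ⋃ i, P ∩ {ω | σ ω ≤ i} := by
    ext ω
    simpa using fun _ => ⟨σ ω, le_rfl⟩
  rw [hunion]
  exact .iUnion fun i => le_iSup (fun t => (𝒢 t : MeasurableSpace Ω)) i _ (hP i)

end Sampling

/-- If `(Z n)` is c.i.d. and `T 1 < T 2 < …` are finite predictable stopping times
(`T j = S j + 1` with `S j` a stopping time) for the natural filtration of `(Z n)`,
then the sampled sequence `(Z (T n))` is c.i.d. -/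
theorem stmt4 {Ω E : Type*} {mΩ : MeasurableSpace Ω} [MeasurableSpace E]
    (μ : Measure Ω) [IsProbabilityMeasure μ] (Z : ℕ → Ω → E)
    (hZ : ∀ n, Measurable (Z n))
    (hcid : IsCIDnat μ Z)
    (𝒢 : Filtration ℕ mΩ)
    (h𝒢 : ∀ n, 𝒢 n = ⨆ i ∈ Set.Icc 1 n, MeasurableSpace.comap (Z i) inferInstance)
    (T : ℕ → Ω → ℕ) (S : ℕ → Ω → ℕ)
    (hTS : ∀ j, 1 ≤ j → ∀ ω, T j ω = S j ω + 1)
    (hS : ∀ j, 1 ≤ j → IsStoppingTime 𝒢 (fun ω => (S j ω : WithTop ℕ)))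
    (hmono : ∀ j, 1 ≤ j → ∀ ω, T j ω < T (j + 1) ω) :
    IsCIDnat μ (fun n ω => Z (T n ω) ω) := by
  have hS_mono : ∀ ω, StrictMono fun j => S (j + 1) ω := fun ω =>
    strictMono_nat_of_lt_succ fun j => by
      have := hmono (j + 1) (by omega) ω
      rwa [hTS _ (by omega), hTS _ (by omega), Nat.add_lt_add_iff_right] at this
  have hsampled : ∀ j k, j < k →
      Measurable[(hS (k + 1) (by omega)).measurableSpace] fun ω => Z (T (j + 1) ω) ω := by
    intro j k hjk
    simp_rw [hTS (j + 1) (by omega)]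
    exact measurable_comp_stoppingTime_of_lt (measurable_succ_of_natural h𝒢) (hS _ (by omega))
      (hS _ (by omega)) fun ω => hS_mono ω hjk
  refine isCIDnat_of_measure_initSeq_inter
    (fun j => (hsampled j (j + 1) j.lt_succ_self).mono (IsStoppingTime.measurableSpace_le _)
      le_rfl)
    fun n C B hC hB => ?_
  have hA : MeasurableSet[(hS (n + 1) (by omega)).measurableSpace]
      (initSeq (fun j ω => Z (T j ω) ω) n ⁻¹' C) :=
    measurable_initSeq (mΩ := (hS (n + 1) (by omega)).measurableSpace)
      (fun i hi => hsampled i n hi) hC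
  have h := hcid.measure_inter_sampled_eq_of_le hZ h𝒢 (hS (n + 1) (by omega))
    (hS (n + 2) (by omega)) (fun ω => (hS_mono ω).monotone n.le_succ) hA hB
  convert h using 3 <;> ext ω <;> simp [hTS]
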